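/- Suppose ξ, η ∈ ℝ³ with ‖η‖ = 1 and ‖ξ − η‖ ≤ ε < 1. Then the operator norm of the difference between the differentials of the radial projection at ξ and the orthogonal projection onto η^⊥ satisfies ‖dP_ξ − (I − η⊗η)‖ ≤ ε(3 − 2ε)/(1 − ε)², where dP_ξ(v) = (1/‖ξ‖)(v − ⟨ξ, v⟩ξ/‖ξ‖²). -/
import Mathlib


open scoped InnerProductSpace

noncomputable section

private lemma aux_proj_le (u v : EuclideanSpace ℝ (Fin 3)) (hu : ‖u‖ = 1) :
    ‖v - ⟪u, v⟫_ℝ • u‖ ≤ ‖v‖ := by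
  have h : ‖v - ⟪u, v⟫_ℝ • u‖ ^ 2 ≤ ‖v‖ ^ 2 := by
    have key := @norm_sub_sq_real (EuclideanSpace ℝ (Fin 3)) _ _ v (⟪u, v⟫_ℝ • u)
    simp only [real_inner_smul_right, norm_smul, Real.norm_eq_abs] at key
    rw [key, hu]
    have h2 : ⟪v, u⟫_ℝ = ⟪u, v⟫_ℝ := real_inner_comm u v
    rw [h2]
    nlinarith [sq_abs (⟪u, v⟫_ℝ), sq_nonneg (⟪u, v⟫_ℝ)]
  nlinarith [norm_nonneg (v - ⟪u, v⟫_ℝ • u), norm_nonneg v]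

set_option maxHeartbeats 1000000 in
private lemma aux_pair_le (u η v : EuclideanSpace ℝ (Fin 3)) (hu : ‖u‖ = 1) (hη : ‖η‖ = 1) :
    ‖⟪u, v⟫_ℝ • u - ⟪η, v⟫_ℝ • η‖ ≤ ‖u - η‖ * ‖v‖ := by
  set a := ⟪u, v⟫_ℝ with ha
  set b := ⟪η, v⟫_ℝ with hb
  set c := ⟪u, η⟫_ℝ with hc
  have hCS := real_inner_mul_inner_self_le (v - b • η) (u - c • η)
  have huu : ⟪u, u⟫_ℝ = 1 := by rw [real_inner_self_eq_norm_sq, hu]; norm_num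
  have hηη : ⟪η, η⟫_ℝ = 1 := by rw [real_inner_self_eq_norm_sq, hη]; norm_num
  have hηu : ⟪η, u⟫_ℝ = c := real_inner_comm u η
  have hvu : ⟪v, u⟫_ℝ = a := real_inner_comm u v
  have hvη : ⟪v, η⟫_ℝ = b := real_inner_comm η v
  have hvv : ⟪v, v⟫_ℝ = ‖v‖ ^ 2 := real_inner_self_eq_norm_sq v
  simp only [inner_sub_left, inner_sub_right, real_inner_smul_left, real_inner_smul_right,
    huu, hηη, hηu, hvu, hvη, hvv] at hCS
  have hL : ‖a • u - b • η‖ ^ 2 = a ^ 2 + b ^ 2 - 2 * (a * b * c) := by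
    have key := @norm_sub_sq_real (EuclideanSpace ℝ (Fin 3)) _ _ (a • u) (b • η)
    simp only [real_inner_smul_left, real_inner_smul_right,
      norm_smul, Real.norm_eq_abs, hu, hη] at key
    rw [key]
    nlinarith [sq_abs a, sq_abs b]
  have hR : ‖u - η‖ ^ 2 = 2 - 2 * c := by
    have key := @norm_sub_sq_real (EuclideanSpace ℝ (Fin 3)) _ _ u η
    rw [key, hu, hη]; ring
  have hc1 : -1 ≤ c := by
    have h := abs_real_inner_le_norm u η
    rw [hu, hη] at h
    have h' := abs_le.mp h
    linarith [h'.1]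
  have hsq : ‖a • u - b • η‖ ^ 2 ≤ (‖u - η‖ * ‖v‖) ^ 2 := by
    rw [hL, mul_pow, hR]
    nlinarith [hCS, mul_nonneg (sq_nonneg ‖v‖) (sq_nonneg (1 - c))]
  have h1 := norm_nonneg (a • u - b • η)
  have h2 := mul_nonneg (norm_nonneg (u - η)) (norm_nonneg v)
  nlinarith

/-- quantitative stability of the projection differential: if `‖η‖ = 1`
and `‖ξ - η‖ ≤ ε < 1`, then the operator norm of
`dP_ξ - (I - η⊗η)` is at most `ε(3-2ε)/(1-ε)²` (stated pointwise against `‖v‖`). -/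
theorem stmt_4 (ξ η : EuclideanSpace ℝ (Fin 3)) (ε : ℝ)
    (hη : ‖η‖ = 1) (hξη : ‖ξ - η‖ ≤ ε) (hε : ε < 1)
    (v : EuclideanSpace ℝ (Fin 3)) :
    ‖(‖ξ‖⁻¹ • (v - (⟪ξ, v⟫_ℝ / ‖ξ‖ ^ 2) • ξ)) - (v - ⟪η, v⟫_ℝ • η)‖
      ≤ (ε * (3 - 2 * ε) / (1 - ε) ^ 2) * ‖v‖ := by
  have hε0 : 0 ≤ ε := le_trans (norm_nonneg _) hξη
  set r := ‖ξ‖ with hr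
  have hrge : 1 - ε ≤ r := by
    have h1 : ‖η‖ - ‖ξ‖ ≤ ‖η - ξ‖ := norm_sub_norm_le η ξ
    rw [norm_sub_rev] at h1
    rw [hη] at h1
    linarith
  have h1ε : (0:ℝ) < 1 - ε := by linarith
  have hr0 : 0 < r := by linarith
  have hrne : r ≠ 0 := ne_of_gt hr0
  have habs : |r - 1| ≤ ε := by
    have h := abs_norm_sub_norm_le ξ η
    rw [hη, ← hr] at h
    linarith [abs_le.mp h]
    
  set u : EuclideanSpace ℝ (Fin 3) := r⁻¹ • ξ with hudef
  have hu : ‖u‖ = 1 := by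
    rw [hudef, norm_smul, Real.norm_eq_abs, abs_inv, abs_of_pos hr0, ← hr]
    field_simp
  have hin : ⟪u, v⟫_ℝ = r⁻¹ * ⟪ξ, v⟫_ℝ := by
    rw [hudef, real_inner_smul_left]
  have hvec : (r⁻¹ • (v - (⟪ξ, v⟫_ℝ / r ^ 2) • ξ)) - (v - ⟪η, v⟫_ℝ • η)
      = (r⁻¹ - 1) • (v - ⟪u, v⟫_ℝ • u) + (⟪η, v⟫_ℝ • η - ⟪u, v⟫_ℝ • u) := by
    rw [hin, hudef]
    match_scalars <;> field_simp <;> ring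
  rw [hvec]
  have hb1 : ‖(r⁻¹ - 1) • (v - ⟪u, v⟫_ℝ • u)‖ ≤ (ε / (1 - ε)) * ‖v‖ := by
    rw [norm_smul, Real.norm_eq_abs]
    have h1 : |r⁻¹ - 1| ≤ ε / (1 - ε) := by
      have heq : r⁻¹ - 1 = (1 - r) / r := by field_simp
      rw [heq, abs_div, abs_of_pos hr0, abs_sub_comm]
      exact div_le_div₀ hε0 habs h1ε hrge
    exact mul_le_mul h1 (aux_proj_le u v hu) (norm_nonneg _) (by positivity)
  have hb2 : ‖⟪η, v⟫_ℝ • η - ⟪u, v⟫_ℝ • u‖ ≤ 2 * ε * ‖v‖ := by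
    have h1 := aux_pair_le η u v hη hu
    have h2 : ‖η - u‖ ≤ 2 * ε := by
      have h3 : ‖η - u‖ ≤ ‖η - ξ‖ + ‖ξ - u‖ := norm_sub_le_norm_sub_add_norm_sub η ξ u
      have h4 : ‖ξ - u‖ = |r - 1| := by
        have heq : ξ - u = (1 - r⁻¹) • ξ := by
          rw [hudef]; match_scalars; ring
        have heq2 : (1 - r⁻¹) * r = r - 1 := by field_simp
        rw [heq, norm_smul, Real.norm_eq_abs, ← hr, ← heq2, abs_mul, abs_of_pos hr0]
      have h5 : ‖η - ξ‖ ≤ ε := by rw [norm_sub_rev]; exact hξη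
      rw [h4] at h3
      linarith
    exact h1.trans (mul_le_mul_of_nonneg_right h2 (norm_nonneg v))
  have hco : ε / (1 - ε) + 2 * ε ≤ ε * (3 - 2 * ε) / (1 - ε) ^ 2 := by
    rw [div_add' _ _ _ (ne_of_gt h1ε), div_le_div_iff₀ h1ε (by positivity)]
    nlinarith [mul_nonneg (mul_nonneg (mul_nonneg hε0 hε0) (by linarith : (0:ℝ) ≤ 3 - 2 * ε)) h1ε.le]
  have hfin : (ε / (1 - ε) + 2 * ε) * ‖v‖ ≤ (ε * (3 - 2 * ε) / (1 - ε) ^ 2) * ‖v‖ :=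
    mul_le_mul_of_nonneg_right hco (norm_nonneg v)
  have htri := norm_add_le ((r⁻¹ - 1) • (v - ⟪u, v⟫_ℝ • u)) (⟪η, v⟫_ℝ • η - ⟪u, v⟫_ℝ • u)
  nlinarith [hb1, hb2, htri, hfin]
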